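/- Let X be a separable metric space, α an ordinal, and Y₁, …, Yₙ subspaces of X such that for each j ≤ n, TWO has a winning strategy in the game G₁^α(𝓞_kfd,𝓞) on Y_j. Then TWO has a winning strategy in G₁^α(𝓞_kfd,𝓞) on ⋃_{j≤n} Y_j; that is, tp_{S₁(𝓞_kfd,𝓞)}(⋃_{j≤n} Y_j) ≤ α whenever tp_{S₁(𝓞_kfd,𝓞)}(Y_j) ≤ α for each j. -/

import Mathlib

open Set Topology

/-- The Lebesgue covering dimension of `X` is at most `n`: every finite open cover has an
open refinement, still covering `X`, in which every point lies in at most `n+1` members. -/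
def CovDimLE (X : Type*) [TopologicalSpace X] (n : ℕ) : Prop :=
  ∀ 𝓤 : Set (Set X), 𝓤.Finite → (∀ U ∈ 𝓤, IsOpen U) → ⋃₀ 𝓤 = Set.univ →
    ∃ 𝓥 : Set (Set X), (∀ V ∈ 𝓥, IsOpen V) ∧ ⋃₀ 𝓥 = Set.univ ∧
      (∀ V ∈ 𝓥, ∃ U ∈ 𝓤, V ⊆ U) ∧
      ∀ x : X, {V | V ∈ 𝓥 ∧ x ∈ V}.Finite ∧ {V | V ∈ 𝓥 ∧ x ∈ V}.ncard ≤ n + 1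

/-- `X` is finite dimensional. -/
def FinDim (X : Type*) [TopologicalSpace X] : Prop :=
  ∃ n : ℕ, CovDimLE X n

/-- The compact finite-dimensional subsets of `X` (as subspaces). -/
def kfdSets (X : Type*) [TopologicalSpace X] : Set (Set X) :=
  {T : Set X | IsCompact T ∧ FinDim T}

/-- The finite-dimensional subsets of `X` (as subspaces). -/
def fdSets (X : Type*) [TopologicalSpace X] : Set (Set X) :=
  {T : Set X | FinDim T}

/-- `X` is countable dimensional: a union of countably many zero-dimensional subsets. -/
def CountableDimensional (X : Type*) [TopologicalSpace X] : Prop :=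
  ∃ Z : ℕ → Set X, (∀ n, CovDimLE (Z n) 0) ∧ (⋃ n, Z n) = Set.univ

/-- `𝓤` is an open `𝓣`-cover of `X`. -/
def IsTCover {X : Type*} [TopologicalSpace X] (𝓣 𝓤 : Set (Set X)) : Prop :=
  (∀ U ∈ 𝓤, IsOpen U) ∧ (∀ x : X, ∃ U ∈ 𝓤, x ∈ U) ∧ ∀ T ∈ 𝓣, ∃ U ∈ 𝓤, T ⊆ U

/-- `𝓤` is an open cover of `X`. -/
def IsOpenCover {X : Type*} [TopologicalSpace X] (𝓤 : Set (Set X)) : Prop :=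
  (∀ U ∈ 𝓤, IsOpen U) ∧ ∀ x : X, ∃ U ∈ 𝓤, x ∈ U

/-- A strategy for TWO in the length-`α` game `G₁`: to each inning `γ < α` and each
history `(O_β : β ≤ γ)` of moves of ONE it assigns a response (a subset of `X`). -/
def TwoStrategy (X : Type*) (α : Ordinal.{0}) :=
  ∀ γ : Ordinal.{0}, γ < α → ((β : Ordinal.{0}) → β ≤ γ → Set (Set X)) → Set X

/-- The strategy `F` for TWO is winning in `G₁^α(𝓞(𝓣),𝓞)`: responses to legal histories are
elements of ONE's last move, and for every play of `𝓣`-covers by ONE the responses cover `X`. -/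
def IsWinningTwo {X : Type*} [TopologicalSpace X] (𝓣 : Set (Set X)) (α : Ordinal.{0})
    (F : TwoStrategy X α) : Prop :=
  (∀ (γ : Ordinal.{0}) (hγ : γ < α) (O : (β : Ordinal.{0}) → β ≤ γ → Set (Set X)),
      (∀ β hβ, IsTCover 𝓣 (O β hβ)) → F γ hγ O ∈ O γ le_rfl) ∧
  ∀ O : (γ : Ordinal.{0}) → γ < α → Set (Set X),
    (∀ γ hγ, IsTCover 𝓣 (O γ hγ)) →
    ∀ x : X, ∃ (γ : Ordinal.{0}) (hγ : γ < α),
      x ∈ F γ hγ (fun β hβ => O β (lt_of_le_of_lt hβ hγ))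

/-- TWO has a winning strategy in `G₁^α(𝓞(𝓣),𝓞)` on `X`. -/
def TwoWins (X : Type*) [TopologicalSpace X] (𝓣 : Set (Set X)) (α : Ordinal.{0}) : Prop :=
  ∃ F : TwoStrategy X α, IsWinningTwo 𝓣 α F

/-- `tp_{S₁(𝓞(𝓣),𝓞)}(X) = α`: TWO wins the length-`α` game but no shorter one. -/
def TPEq (X : Type*) [TopologicalSpace X] (𝓣 : Set (Set X)) (α : Ordinal.{0}) : Prop :=
  TwoWins X 𝓣 α ∧ ∀ β < α, ¬ TwoWins X 𝓣 β

/-- `tp_{S₁(𝓞(𝓣),𝓞)}(X) ≤ α`. -/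
def TPLe (X : Type*) [TopologicalSpace X] (𝓣 : Set (Set X)) (α : Ordinal.{0}) : Prop :=
  ∃ β ≤ α, TwoWins X 𝓣 β

/-- A strategy for TWO in the length-`α` game `G_c`. -/
def TwoStrategyC (X : Type*) (α : Ordinal.{0}) :=
  ∀ γ : Ordinal.{0}, γ < α → ((β : Ordinal.{0}) → β ≤ γ → Set (Set X)) → Set (Set X)

/-- The strategy `F` for TWO is winning in `G_c^α(𝓞,𝓞)`: to legal histories it responds with
pairwise disjoint families of open sets refining ONE's last move, and for every play of open
covers by ONE the union of the responses covers `X`. -/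
def IsWinningTwoC {X : Type*} [TopologicalSpace X] (α : Ordinal.{0})
    (F : TwoStrategyC X α) : Prop :=
  (∀ (γ : Ordinal.{0}) (hγ : γ < α) (O : (β : Ordinal.{0}) → β ≤ γ → Set (Set X)),
      (∀ β hβ, IsOpenCover (O β hβ)) →
        (∀ V ∈ F γ hγ O, IsOpen V) ∧ (F γ hγ O).Pairwise Disjoint ∧
          ∀ V ∈ F γ hγ O, ∃ U ∈ O γ le_rfl, V ⊆ U) ∧
  ∀ O : (γ : Ordinal.{0}) → γ < α → Set (Set X),
    (∀ γ hγ, IsOpenCover (O γ hγ)) →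
    ∀ x : X, ∃ (γ : Ordinal.{0}) (hγ : γ < α),
      ∃ V ∈ F γ hγ (fun β hβ => O β (lt_of_le_of_lt hβ hγ)), x ∈ V

/-- TWO has a winning strategy in `G_c^α(𝓞,𝓞)` on `X`. -/
def TwoWinsC (X : Type*) [TopologicalSpace X] (α : Ordinal.{0}) : Prop :=
  ∃ F : TwoStrategyC X α, IsWinningTwoC α F

/-- `tp_{S_c(𝓞,𝓞)}(X) = α`. -/
def TPCEq (X : Type*) [TopologicalSpace X] (α : Ordinal.{0}) : Prop :=
  TwoWinsC X α ∧ ∀ β < α, ¬ TwoWinsC X β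

/-- `tp_{S_c(𝓞,𝓞)}(X) ≤ α`. -/
def TPCLe (X : Type*) [TopologicalSpace X] (α : Ordinal.{0}) : Prop :=
  ∃ β ≤ α, TwoWinsC X β

/-!
TWO plays on `⋃ j, Y j` by running winning strategies on all the `Y j` in parallel against
simulated moves of ONE. Since a winning strategy always answers legally, after any legal partial
play on `Y j` there is a compact finite-dimensional `S j ⊆ Y j` such that ONE can force the next
answer into any open set containing `S j`. By the sum theorem, proved by swelling finite open
covers of compact sets without raising their order, `⋃ j, S j` is again compact and
finite-dimensional, so ONE's actual cover has a member `U ⊇ ⋃ j, S j`. TWO answers `U`, and in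
each simulated game ONE forces the answer into `U ∩ Y j`. A point of `Y j` is covered at some
inning of the simulated game on `Y j`, hence by TWO's answer at that inning.
-/

section CoveringDimension

variable {X Y : Type*} [TopologicalSpace X] [TopologicalSpace Y] {n : ℕ}

theorem CovDimLE.of_homeomorph (e : X ≃ₜ Y) (h : CovDimLE X n) : CovDimLE Y n := by
  intro 𝓤 h𝓤fin h𝓤open h𝓤cov
  obtain ⟨𝓥, h𝓥open, h𝓥cov, h𝓥ref, h𝓥ord⟩ := h ((e ⁻¹' ·) '' 𝓤) (h𝓤fin.image _)
    (by rintro _ ⟨U, hU, rfl⟩; exact (h𝓤open U hU).preimage e.continuous)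
    (by rw [sUnion_image, ← preimage_sUnion, h𝓤cov, preimage_univ])
  have hinj : Function.Injective (e.symm ⁻¹' · : Set X → Set Y) :=
    preimage_injective.mpr e.symm.surjective
  have hord : ∀ y, {W | W ∈ (e.symm ⁻¹' ·) '' 𝓥 ∧ y ∈ W} =
      (e.symm ⁻¹' ·) '' {V | V ∈ 𝓥 ∧ e.symm y ∈ V} := by
    intro y; ext W; constructor
    · rintro ⟨⟨V, hV, rfl⟩, hy⟩; exact ⟨V, ⟨hV, hy⟩, rfl⟩
    · rintro ⟨V, ⟨hV, hy⟩, rfl⟩; exact ⟨⟨V, hV, rfl⟩, hy⟩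
  refine ⟨(e.symm ⁻¹' ·) '' 𝓥, ?_, ?_, ?_, fun y => ?_⟩
  · rintro _ ⟨V, hV, rfl⟩; exact (h𝓥open V hV).preimage e.symm.continuous
  · rw [sUnion_image, ← preimage_sUnion, h𝓥cov, preimage_univ]
  · rintro _ ⟨V, hV, rfl⟩
    obtain ⟨_, ⟨U, hU, rfl⟩, hVU⟩ := h𝓥ref V hV
    exact ⟨U, hU, fun y hy => by simpa using hVU hy⟩
  · rw [hord, ncard_image_of_injective _ hinj]
    exact ⟨(h𝓥ord _).1.image _, (h𝓥ord _).2⟩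

theorem CovDimLE.preimage_val {s t : Set X} (hts : t ⊆ s) (h : CovDimLE t n) :
    CovDimLE (Subtype.val ⁻¹' t : Set s) n :=
  h.of_homeomorph ((IsEmbedding.subtypeVal.homeomorphImage _).trans
    (Homeomorph.setCongr (by rw [Subtype.image_preimage_coe, inter_eq_right.mpr hts]))).symm

theorem FinDim.of_homeomorph (e : X ≃ₜ Y) : FinDim X → FinDim Y
  | ⟨n, h⟩ => ⟨n, h.of_homeomorph e⟩

theorem covDimLE_zero_of_subsingleton [Subsingleton X] : CovDimLE X 0 := by
  intro 𝓤 _ _ h𝓤cov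
  rcases isEmpty_or_nonempty X with hX | ⟨⟨x₀⟩⟩
  · exact ⟨∅, by simp, by simp [eq_iff_true_of_subsingleton], by simp, isEmptyElim⟩
  · obtain ⟨U, hU, hx₀⟩ : x₀ ∈ ⋃₀ 𝓤 := h𝓤cov ▸ mem_univ x₀
    refine ⟨{U}, by simp,
      eq_univ_of_forall fun x => by rwa [sUnion_singleton, Subsingleton.elim x x₀],
      fun V hV => ⟨U, hU, (mem_singleton_iff.mp hV).le⟩, fun x => ?_⟩
    have hsub : {V | V ∈ ({U} : Set (Set X)) ∧ x ∈ V} ⊆ {U} := fun V hV => hV.1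
    exact ⟨(finite_singleton U).subset hsub,
      (ncard_le_ncard hsub (finite_singleton U)).trans (by simp)⟩

theorem FinDim.of_subsingleton [Subsingleton X] : FinDim X :=
  ⟨0, covDimLE_zero_of_subsingleton⟩

theorem CovDimLE.exists_finite_refinement [CompactSpace X] (h : CovDimLE X n)
    {𝓤 : Set (Set X)} (h𝓤fin : 𝓤.Finite) (h𝓤open : ∀ U ∈ 𝓤, IsOpen U)
    (h𝓤cov : ⋃₀ 𝓤 = univ) :
    ∃ 𝓥 : Set (Set X), 𝓥.Finite ∧ (∀ V ∈ 𝓥, IsOpen V) ∧ ⋃₀ 𝓥 = univ ∧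
      (∀ V ∈ 𝓥, ∃ U ∈ 𝓤, V ⊆ U) ∧ ∀ x, {V | V ∈ 𝓥 ∧ x ∈ V}.ncard ≤ n + 1 := by
  obtain ⟨𝓥, h𝓥open, h𝓥cov, h𝓥ref, h𝓥ord⟩ := h 𝓤 h𝓤fin h𝓤open h𝓤cov
  obtain ⟨𝓥₀, h𝓥₀, h𝓥₀fin, h𝓥₀cov⟩ := isCompact_univ.elim_finite_subcover_image
    (c := id) h𝓥open (by simp [← sUnion_eq_biUnion, h𝓥cov])
  refine ⟨𝓥₀, h𝓥₀fin, fun V hV => h𝓥open V (h𝓥₀ hV), ?_,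
    fun V hV => h𝓥ref V (h𝓥₀ hV), fun x => ?_⟩
  · simpa [← sUnion_eq_biUnion, univ_subset_iff] using h𝓥₀cov
  · exact (ncard_le_ncard (t := {V | V ∈ 𝓥 ∧ x ∈ V}) (fun V hV => ⟨h𝓥₀ hV.1, hV.2⟩)
      (h𝓥ord x).1).trans (h𝓥ord x).2

end CoveringDimension

section Swelling

open Metric

variable {X : Type*} [PseudoEMetricSpace X]

def swelling (A V : Set X) : Set X :=
  {x | infEDist x V < infEDist x (A \ V)}

theorem isOpen_swelling (A V : Set X) : IsOpen (swelling A V) :=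
  isOpen_lt continuous_infEDist continuous_infEDist

theorem subset_swelling {A V : Set X} (hV : IsClosed (A \ V)) : V ⊆ swelling A V := by
  intro x hx
  show infEDist x V < _
  rw [infEDist_zero_of_mem hx, infEDist_pos_iff_notMem_closure, hV.closure_eq]
  exact fun h => h.2 hx

theorem exists_forall_mem_of_forall_mem_swelling {ι : Type*} {I : Set ι} (hI : I.Finite)
    (hne : I.Nonempty) {A : Set X} {V : ι → Set X} (hVA : ∀ i ∈ I, V i ⊆ A) {x : X}
    (hx : ∀ i ∈ I, x ∈ swelling A (V i)) : ∃ a, ∀ i ∈ I, a ∈ V i := by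
  obtain ⟨i₁, hi₁, hmin₁⟩ := exists_min_image I (fun i => infEDist x (V i)) hI hne
  obtain ⟨i₂, hi₂, hmin₂⟩ := exists_min_image I (fun i => infEDist x (A \ V i)) hI hne
  obtain ⟨a, ha, hxa⟩ := infEDist_lt_iff.mp ((hmin₁ i₂ hi₂).trans_lt (hx i₂ hi₂))
  refine ⟨a, fun i hi => by_contra fun hai => ?_⟩
  exact (hxa.trans_le (hmin₂ i hi)).not_ge (infEDist_le_edist_of_mem ⟨hVA i₁ hi₁ ha, hai⟩)

theorem ncard_swelling_le {ι : Type*} {I : Set ι} (hI : I.Finite) {A : Set X} {V : ι → Set X}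
    (hVA : ∀ i ∈ I, V i ⊆ A) {N : ℕ} (hord : ∀ a ∈ A, {i | i ∈ I ∧ a ∈ V i}.ncard ≤ N) (x : X) :
    {i | i ∈ I ∧ x ∈ swelling A (V i)}.ncard ≤ N := by
  set T := {i | i ∈ I ∧ x ∈ swelling A (V i)}
  rcases T.eq_empty_or_nonempty with hT | hT
  · simp [hT]
  obtain ⟨a, ha⟩ := exists_forall_mem_of_forall_mem_swelling (hI.subset fun i hi => hi.1) hT
    (fun i hi => hVA i hi.1) (fun i hi => hi.2)
  obtain ⟨i, hi⟩ := hT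
  exact (ncard_le_ncard (t := {j | j ∈ I ∧ a ∈ V j}) (fun j hj => ⟨hj.1, ha j hj⟩)
    (hI.subset fun j hj => hj.1)).trans (hord a (hVA i hi.1 (ha i hi)))

end Swelling

section SumTheorem

variable {X : Type*} [MetricSpace X] {m k : ℕ}

theorem IsClosed.isClosed_diff_image_val {A : Set X} (hA : IsClosed A) {V : Set A}
    (hV : IsOpen V) : IsClosed (A \ Subtype.val '' V) := by
  rw [← image_val_compl]
  exact hA.isClosedMap_subtype_val _ hV.isClosed_compl

theorem exists_refinement_of_covDimLE {A : Set X} (hA : IsCompact A) (hd : CovDimLE A m)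
    {𝓤 : Set (Set X)} (h𝓤fin : 𝓤.Finite) (h𝓤open : ∀ U ∈ 𝓤, IsOpen U) (h𝓤cov : A ⊆ ⋃₀ 𝓤) :
    ∃ 𝓐 : Set (Set X), 𝓐.Finite ∧ (∀ P ∈ 𝓐, IsOpen P) ∧ A ⊆ ⋃₀ 𝓐 ∧
      (∀ P ∈ 𝓐, ∃ U ∈ 𝓤, P ⊆ U) ∧ ∀ x, {P | P ∈ 𝓐 ∧ x ∈ P}.ncard ≤ m + 1 := by
  have : CompactSpace A := isCompact_iff_compactSpace.mp hA
  obtain ⟨𝓥, h𝓥fin, h𝓥open, h𝓥cov, h𝓥ref, h𝓥ord⟩ :=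
    hd.exists_finite_refinement (𝓤 := (Subtype.val ⁻¹' ·) '' 𝓤) (h𝓤fin.image _)
      (by rintro _ ⟨U, hU, rfl⟩; exact (h𝓤open U hU).preimage continuous_subtype_val)
      (by rw [sUnion_image, ← preimage_sUnion, ← univ_subset_iff]; exact fun a _ => h𝓤cov a.2)
  simp only [exists_mem_image] at h𝓥ref
  choose! U hU hVU using h𝓥ref
  set W : Set A → Set X := fun V => swelling A (Subtype.val '' V) ∩ U V
  have hext : ∀ V ∈ 𝓥, Subtype.val '' V ⊆ W V := fun V hV =>
    subset_inter (subset_swelling (hA.isClosed.isClosed_diff_image_val (h𝓥open V hV)))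
      (image_subset_iff.mpr (hVU V hV))
  refine ⟨W '' 𝓥, h𝓥fin.image _, ?_, ?_, ?_, fun x => ?_⟩
  · rintro _ ⟨V, hV, rfl⟩
    exact (isOpen_swelling _ _).inter (h𝓤open _ (hU V hV))
  · intro a ha
    obtain ⟨V, hV, haV⟩ : (⟨a, ha⟩ : A) ∈ ⋃₀ 𝓥 := h𝓥cov ▸ mem_univ _
    exact ⟨W V, mem_image_of_mem _ hV, hext V hV ⟨_, haV, rfl⟩⟩
  · rintro _ ⟨V, hV, rfl⟩
    exact ⟨U V, hU V hV, inter_subset_right⟩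
  set T := {V | V ∈ 𝓥 ∧ x ∈ W V}
  have hTfin : T.Finite := h𝓥fin.subset fun V hV => hV.1
  have hsub : {P | P ∈ W '' 𝓥 ∧ x ∈ P} ⊆ W '' T := by
    rintro _ ⟨⟨V, hV, rfl⟩, hx⟩
    exact ⟨V, ⟨hV, hx⟩, rfl⟩
  calc _ ≤ (W '' T).ncard := ncard_le_ncard hsub (hTfin.image _)
    _ ≤ T.ncard := ncard_image_le hTfin
    _ ≤ {V | V ∈ 𝓥 ∧ x ∈ swelling A (Subtype.val '' V)}.ncard :=
      ncard_le_ncard (fun V hV => ⟨hV.1, hV.2.1⟩) (h𝓥fin.subset fun V hV => hV.1)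
    _ ≤ m + 1 := ncard_swelling_le h𝓥fin (fun V _ => Subtype.coe_image_subset A V)
      (fun a ha => by simpa [ha] using h𝓥ord ⟨a, ha⟩) x

theorem covDimLE_of_union_eq_univ {A B : Set X} (hA : IsCompact A) (hB : IsCompact B)
    (hAB : A ∪ B = univ) (hdA : CovDimLE A m) (hdB : CovDimLE B k) :
    CovDimLE X (m + k + 1) := by
  intro 𝓤 h𝓤fin h𝓤open h𝓤cov
  obtain ⟨𝓐, h𝓐fin, h𝓐open, h𝓐cov, h𝓐ref, h𝓐ord⟩ :=
    exists_refinement_of_covDimLE hA hdA h𝓤fin h𝓤open (h𝓤cov ▸ subset_univ A)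
  obtain ⟨𝓑, h𝓑fin, h𝓑open, h𝓑cov, h𝓑ref, h𝓑ord⟩ :=
    exists_refinement_of_covDimLE hB hdB h𝓤fin h𝓤open (h𝓤cov ▸ subset_univ B)
  refine ⟨𝓐 ∪ (· \ A) '' 𝓑, ?_, ?_, ?_, fun x => ?_⟩
  · rintro V (hV | ⟨Q, hQ, rfl⟩)
    exacts [h𝓐open V hV, (h𝓑open Q hQ).sdiff hA.isClosed]
  · refine eq_univ_of_forall fun x => ?_
    by_cases hx : x ∈ A
    · obtain ⟨P, hP, hxP⟩ := h𝓐cov hx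
      exact ⟨P, Or.inl hP, hxP⟩
    · obtain ⟨Q, hQ, hxQ⟩ := h𝓑cov (((hAB ▸ mem_univ x) : x ∈ A ∪ B).resolve_left hx)
      exact ⟨Q \ A, Or.inr ⟨Q, hQ, rfl⟩, hxQ, hx⟩
  · rintro V (hV | ⟨Q, hQ, rfl⟩)
    · exact h𝓐ref V hV
    · obtain ⟨U, hU, hQU⟩ := h𝓑ref Q hQ
      exact ⟨U, hU, sdiff_subset.trans hQU⟩
  have hsub : {V | V ∈ 𝓐 ∪ (· \ A) '' 𝓑 ∧ x ∈ V} ⊆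
      {P | P ∈ 𝓐 ∧ x ∈ P} ∪ (· \ A) '' {Q | Q ∈ 𝓑 ∧ x ∈ Q} := by
    rintro V ⟨hV | ⟨Q, hQ, rfl⟩, hx⟩
    exacts [Or.inl ⟨hV, hx⟩, Or.inr ⟨Q, ⟨hQ, hx.1⟩, rfl⟩]
  have h𝓑xfin : {Q | Q ∈ 𝓑 ∧ x ∈ Q}.Finite := h𝓑fin.subset fun Q hQ => hQ.1
  have hfin : ({P | P ∈ 𝓐 ∧ x ∈ P} ∪ (· \ A) '' {Q | Q ∈ 𝓑 ∧ x ∈ Q}).Finite :=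
    (h𝓐fin.subset fun P hP => hP.1).union (h𝓑xfin.image _)
  refine ⟨hfin.subset hsub, ?_⟩
  calc _ ≤ _ := ncard_le_ncard hsub hfin
    _ ≤ _ := ncard_union_le _ _
    _ ≤ (m + 1) + (k + 1) := add_le_add (h𝓐ord x) ((ncard_image_le h𝓑xfin).trans (h𝓑ord x))
    _ = m + k + 1 + 1 := by ring

end SumTheorem

section KfdSets

theorem singleton_mem_kfdSets {X : Type*} [TopologicalSpace X] (x : X) :
    {x} ∈ kfdSets X :=
  ⟨isCompact_singleton, FinDim.of_subsingleton⟩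

theorem Topology.IsEmbedding.image_mem_kfdSets {X Y : Type*} [TopologicalSpace X]
    [TopologicalSpace Y] {f : X → Y} (hf : IsEmbedding f) {S : Set X} (hS : S ∈ kfdSets X) :
    f '' S ∈ kfdSets Y :=
  ⟨hS.1.image hf.continuous, hS.2.of_homeomorph (hf.homeomorphImage S)⟩

variable {X : Type*} [MetricSpace X]

theorem union_mem_kfdSets {A B : Set X} (hA : A ∈ kfdSets X) (hB : B ∈ kfdSets X) :
    A ∪ B ∈ kfdSets X := by
  obtain ⟨⟨m, hm⟩, ⟨k, hk⟩⟩ := And.intro hA.2 hB.2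
  have hcompact : ∀ C ⊆ A ∪ B, IsCompact C → IsCompact (Subtype.val ⁻¹' C : Set ↥(A ∪ B)) :=
    fun C hC hCc =>
      (IsInducing.subtypeVal.isCompact_preimage_iff (by rwa [Subtype.range_coe])).mpr hCc
  refine ⟨hA.1.union hB.1, m + k + 1, covDimLE_of_union_eq_univ
    (hcompact A subset_union_left hA.1) (hcompact B subset_union_right hB.1) ?_
    (hm.preimage_val subset_union_left) (hk.preimage_val subset_union_right)⟩
  rw [← preimage_union, Subtype.coe_preimage_self]

theorem sUnion_mem_kfdSets {𝓚 : Set (Set X)} (h𝓚 : 𝓚.Finite) (h : 𝓚 ⊆ kfdSets X) :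
    ⋃₀ 𝓚 ∈ kfdSets X := by
  induction 𝓚, h𝓚 using Set.Finite.induction_on with
  | empty =>
    rw [sUnion_empty]
    exact ⟨isCompact_empty, FinDim.of_subsingleton⟩
  | @insert K 𝓚 _ _ ih =>
    rw [sUnion_insert]
    exact union_mem_kfdSets (h (mem_insert _ _)) (ih ((subset_insert _ _).trans h))

theorem iUnion_mem_kfdSets {ι : Type*} [Finite ι] {S : ι → Set X} (h : ∀ j, S j ∈ kfdSets X) :
    ⋃ j, S j ∈ kfdSets X := by
  rw [← sUnion_range]
  exact sUnion_mem_kfdSets (finite_range S) (range_subset_iff.mpr h)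

end KfdSets

section History

variable {X : Type*}

def extendHistory {γ : Ordinal.{0}} (h : ∀ β : Ordinal.{0}, β < γ → Set (Set X))
    (𝓤 : Set (Set X)) : ∀ β : Ordinal.{0}, β ≤ γ → Set (Set X) :=
  fun β _ => if hβ : β < γ then h β hβ else 𝓤

theorem extendHistory_self {γ : Ordinal.{0}} (h : ∀ β : Ordinal.{0}, β < γ → Set (Set X))
    (𝓤 : Set (Set X)) : extendHistory h 𝓤 γ le_rfl = 𝓤 :=
  dif_neg (lt_irrefl γ)

theorem extendHistory_restrict {γ : Ordinal.{0}} (H : ∀ β : Ordinal.{0}, β ≤ γ → Set (Set X)) :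
    extendHistory (fun β hβ => H β hβ.le) (H γ le_rfl) = H := by
  funext β hβ
  rcases hβ.lt_or_eq with hlt | rfl
  · exact dif_pos hlt
  · exact extendHistory_self _ _

end History

section Forcing

variable {X : Type*} [TopologicalSpace X] {𝓣 : Set (Set X)} {α : Ordinal.{0}}

theorem isTCover_extendHistory {γ : Ordinal.{0}} {h : ∀ β : Ordinal.{0}, β < γ → Set (Set X)}
    (hh : ∀ β hβ, IsTCover 𝓣 (h β hβ)) {𝓤 : Set (Set X)} (h𝓤 : IsTCover 𝓣 𝓤) :
    ∀ β hβ, IsTCover 𝓣 (extendHistory h 𝓤 β hβ) := by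
  intro β _
  unfold extendHistory
  split_ifs with hβ
  exacts [hh β hβ, h𝓤]

theorem isTCover_singleton_univ : IsTCover 𝓣 {(univ : Set X)} :=
  ⟨by simp, fun x => ⟨univ, rfl, mem_univ x⟩, fun T _ => ⟨univ, rfl, subset_univ T⟩⟩

def CanForce (𝓣 : Set (Set X)) (F : TwoStrategy X α) (γ : Ordinal.{0}) (hγ : γ < α)
    (h : ∀ β : Ordinal.{0}, β < γ → Set (Set X)) (V : Set X) : Prop :=
  ∃ 𝓤, IsTCover 𝓣 𝓤 ∧ F γ hγ (extendHistory h 𝓤) ⊆ V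

/-- If no member of `𝓣` had this property, ONE could play the cover made of one unforceable
neighbourhood of each member of `𝓣`, and `F` would have no legal answer to it. -/
theorem exists_forall_canForce {F : TwoStrategy X α} (hF : IsWinningTwo 𝓣 α F)
    (h𝓣 : ∀ x, ∃ T ∈ 𝓣, x ∈ T) {γ : Ordinal.{0}} (hγ : γ < α)
    {h : ∀ β : Ordinal.{0}, β < γ → Set (Set X)} (hh : ∀ β hβ, IsTCover 𝓣 (h β hβ)) :
    ∃ S ∈ 𝓣, ∀ V, IsOpen V → S ⊆ V → CanForce 𝓣 F γ hγ h V := by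
  by_contra! hcon
  choose! W hWopen hSW hWbad using hcon
  have hcover : IsTCover 𝓣 (W '' 𝓣) := by
    refine ⟨?_, fun x => ?_, fun T hT => ⟨W T, mem_image_of_mem W hT, hSW T hT⟩⟩
    · rintro _ ⟨S, hS, rfl⟩
      exact hWopen S hS
    · obtain ⟨T, hT, hxT⟩ := h𝓣 x
      exact ⟨W T, mem_image_of_mem W hT, hSW T hT hxT⟩
  have hanswer := hF.1 γ hγ _ (isTCover_extendHistory hh hcover)
  rw [extendHistory_self] at hanswer
  obtain ⟨S, hS, hFS⟩ := hanswer
  exact hWbad S hS ⟨W '' 𝓣, hcover, hFS.ge⟩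

open Classical in
noncomputable def forcingKernel (𝓣 : Set (Set X)) (F : TwoStrategy X α) (γ : Ordinal.{0})
    (hγ : γ < α) (h : ∀ β : Ordinal.{0}, β < γ → Set (Set X)) : Set X :=
  if p : ∃ S ∈ 𝓣, ∀ V, IsOpen V → S ⊆ V → CanForce 𝓣 F γ hγ h V then p.choose else ∅

theorem forcingKernel_spec {F : TwoStrategy X α} (hF : IsWinningTwo 𝓣 α F)
    (h𝓣 : ∀ x, ∃ T ∈ 𝓣, x ∈ T) {γ : Ordinal.{0}} (hγ : γ < α)
    {h : ∀ β : Ordinal.{0}, β < γ → Set (Set X)} (hh : ∀ β hβ, IsTCover 𝓣 (h β hβ)) :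
    forcingKernel 𝓣 F γ hγ h ∈ 𝓣 ∧
      ∀ V, IsOpen V → forcingKernel 𝓣 F γ hγ h ⊆ V → CanForce 𝓣 F γ hγ h V := by
  have p := exists_forall_canForce hF h𝓣 hγ hh
  rw [forcingKernel, dif_pos p]
  exact p.choose_spec

open Classical in
/-- The default `{univ}` is a legal move too, so simulated plays built from `forcingMove` are
legal with no further hypotheses. -/
noncomputable def forcingMove (𝓣 : Set (Set X)) (F : TwoStrategy X α) (γ : Ordinal.{0})
    (hγ : γ < α) (h : ∀ β : Ordinal.{0}, β < γ → Set (Set X)) (V : Set X) : Set (Set X) :=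
  if p : CanForce 𝓣 F γ hγ h V then p.choose else {univ}

theorem isTCover_forcingMove (F : TwoStrategy X α) (γ : Ordinal.{0}) (hγ : γ < α)
    (h : ∀ β : Ordinal.{0}, β < γ → Set (Set X)) (V : Set X) :
    IsTCover 𝓣 (forcingMove 𝓣 F γ hγ h V) := by
  unfold forcingMove
  split_ifs with p
  exacts [p.choose_spec.1, isTCover_singleton_univ]

theorem forcingMove_forces {F : TwoStrategy X α} {γ : Ordinal.{0}} {hγ : γ < α}
    {h : ∀ β : Ordinal.{0}, β < γ → Set (Set X)} {V : Set X} (p : CanForce 𝓣 F γ hγ h V) :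
    F γ hγ (extendHistory h (forcingMove 𝓣 F γ hγ h V)) ⊆ V := by
  rw [forcingMove, dif_pos p]
  exact p.choose_spec.2

end Forcing

open Classical in
noncomputable def pickSuperset {X : Type*} (𝓤 : Set (Set X)) (S : Set X) : Set X :=
  if p : ∃ U ∈ 𝓤, S ⊆ U then p.choose else ∅

theorem pickSuperset_spec {X : Type*} {𝓤 : Set (Set X)} {S : Set X} (p : ∃ U ∈ 𝓤, S ⊆ U) :
    pickSuperset 𝓤 S ∈ 𝓤 ∧ S ⊆ pickSuperset 𝓤 S := by
  rw [pickSuperset, dif_pos p]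
  exact p.choose_spec

section Union

variable {ι : Type*} {Y : ι → Type*} [∀ j, TopologicalSpace (Y j)] {Z : Type*} {α : Ordinal.{0}}
  (𝓣 : ∀ j, Set (Set (Y j))) (f : ∀ j, Y j → Z)
  (F : ∀ j, TwoStrategy (Y j) α)

/-- TWO's answer to the move `𝓞` of ONE at inning `γ`, given the simulated histories `h j` of
the games on the `Y j`. -/
noncomputable def unionAnswer (γ : Ordinal.{0}) (hγ : γ < α)
    (h : ∀ j, ∀ β : Ordinal.{0}, β < γ → Set (Set (Y j))) (𝓞 : Set (Set Z)) : Set Z :=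
  pickSuperset 𝓞 (⋃ j, f j '' forcingKernel (𝓣 j) (F j) γ hγ (h j))

/-- ONE's simulated move at inning `γ` of the game on `Y j`, computed from ONE's actual moves
up to inning `γ` on `Z`. -/
noncomputable def simulatedMove : ∀ γ : Ordinal.{0}, γ < α →
    (∀ β : Ordinal.{0}, β ≤ γ → Set (Set Z)) → ∀ j, Set (Set (Y j)) :=
  Ordinal.lt_wf.fix fun γ rec hγ O =>
    let h j β hβ := rec β hβ (hβ.trans hγ) (fun δ hδ => O δ (hδ.trans hβ.le)) j
    fun j => forcingMove (𝓣 j) (F j) γ hγ (h j) (f j ⁻¹' unionAnswer 𝓣 f F γ hγ h (O γ le_rfl))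

noncomputable def simulatedHistory (γ : Ordinal.{0}) (hγ : γ < α)
    (O : ∀ β : Ordinal.{0}, β ≤ γ → Set (Set Z)) (j : ι) :
    ∀ β : Ordinal.{0}, β < γ → Set (Set (Y j)) :=
  fun β hβ => simulatedMove 𝓣 f F β (hβ.trans hγ) (fun δ hδ => O δ (hδ.trans hβ.le)) j

noncomputable def unionStrategy : TwoStrategy Z α :=
  fun γ hγ O => unionAnswer 𝓣 f F γ hγ (simulatedHistory 𝓣 f F γ hγ O) (O γ le_rfl)

variable {𝓣 f F}

theorem simulatedMove_eq (γ : Ordinal.{0}) (hγ : γ < α)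
    (O : ∀ β : Ordinal.{0}, β ≤ γ → Set (Set Z)) (j : ι) :
    simulatedMove 𝓣 f F γ hγ O j = forcingMove (𝓣 j) (F j) γ hγ
      (simulatedHistory 𝓣 f F γ hγ O j) (f j ⁻¹' unionStrategy 𝓣 f F γ hγ O) := by
  rw [simulatedMove, WellFounded.fix_eq]
  rfl

theorem isTCover_simulatedMove (γ : Ordinal.{0}) (hγ : γ < α)
    (O : ∀ β : Ordinal.{0}, β ≤ γ → Set (Set Z)) (j : ι) :
    IsTCover (𝓣 j) (simulatedMove 𝓣 f F γ hγ O j) := by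
  rw [simulatedMove_eq]
  exact isTCover_forcingMove _ _ _ _ _

theorem isTCover_simulatedHistory (γ : Ordinal.{0}) (hγ : γ < α)
    (O : ∀ β : Ordinal.{0}, β ≤ γ → Set (Set Z)) (j : ι) :
    ∀ β hβ, IsTCover (𝓣 j) (simulatedHistory 𝓣 f F γ hγ O j β hβ) :=
  fun β _ => isTCover_simulatedMove β _ _ j

variable [TopologicalSpace Z] {𝓢 : Set (Set Z)} (h𝓣 : ∀ j x, ∃ T ∈ 𝓣 j, x ∈ T)
  (h𝓢 : ∀ S : ∀ j, Set (Y j), (∀ j, S j ∈ 𝓣 j) → ⋃ j, f j '' S j ∈ 𝓢)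
include h𝓣 h𝓢

section Winning

variable (hF : ∀ j, IsWinningTwo (𝓣 j) α (F j))
include hF

theorem unionStrategy_spec {γ : Ordinal.{0}} (hγ : γ < α)
    {O : ∀ β : Ordinal.{0}, β ≤ γ → Set (Set Z)} (hO : IsTCover 𝓢 (O γ le_rfl)) :
    unionStrategy 𝓣 f F γ hγ O ∈ O γ le_rfl ∧ ∀ j,
      f j '' forcingKernel (𝓣 j) (F j) γ hγ (simulatedHistory 𝓣 f F γ hγ O j) ⊆
        unionStrategy 𝓣 f F γ hγ O := by
  have hker : ∀ j, forcingKernel (𝓣 j) (F j) γ hγ (simulatedHistory 𝓣 f F γ hγ O j) ∈ 𝓣 j :=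
    fun j => (forcingKernel_spec (hF j) (h𝓣 j) hγ (isTCover_simulatedHistory γ hγ O j)).1
  have ⟨hmem, hsub⟩ := pickSuperset_spec (hO.2.2 _ (h𝓢 _ hker))
  exact ⟨hmem, fun j => (subset_iUnion (fun i => f i '' _) j).trans hsub⟩

theorem isWinningTwo_unionStrategy (hf : ∀ j, Continuous (f j))
    (hsurj : ∀ z, ∃ j y, f j y = z) : IsWinningTwo 𝓢 α (unionStrategy 𝓣 f F) := by
  refine ⟨fun γ hγ O hO => (unionStrategy_spec h𝓣 h𝓢 hF hγ (hO γ le_rfl)).1,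
    fun O hO z => ?_⟩
  obtain ⟨j, y, rfl⟩ := hsurj z
  obtain ⟨γ, hγ, hy⟩ := (hF j).2
    (fun γ hγ => simulatedMove 𝓣 f F γ hγ (fun β hβ => O β (hβ.trans_lt hγ)) j)
    (fun γ hγ => isTCover_simulatedMove _ _ _ _) y
  refine ⟨γ, hγ, ?_⟩
  set O' : ∀ β : Ordinal.{0}, β ≤ γ → Set (Set Z) := fun β hβ => O β (hβ.trans_lt hγ)
  obtain ⟨hmem, hker⟩ := unionStrategy_spec h𝓣 h𝓢 hF hγ (O := O') (hO γ hγ)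
  have hforce := (forcingKernel_spec (hF j) (h𝓣 j) hγ (isTCover_simulatedHistory γ hγ O' j)).2 _
    (((hO γ hγ).1 _ hmem).preimage (hf j)) (image_subset_iff.mp (hker j))
  rw [← extendHistory_restrict (fun β hβ => simulatedMove 𝓣 f F β _ _ j)] at hy
  rw [simulatedMove_eq] at hy
  exact forcingMove_forces hforce hy

end Winning

theorem twoWins_of_forall_twoWins (hf : ∀ j, Continuous (f j))
    (hsurj : ∀ z, ∃ j y, f j y = z) (hW : ∀ j, TwoWins (Y j) (𝓣 j) α) : TwoWins Z 𝓢 α := by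
  choose F hF using hW
  exact ⟨unionStrategy 𝓣 f F, isWinningTwo_unionStrategy h𝓣 h𝓢 hF hf hsurj⟩

end Union

theorem statement_5_general {X : Type*} [MetricSpace X]
    (α : Ordinal.{0}) (n : ℕ) (Y : Fin n → Set X)
    (h : ∀ j, TwoWins ↥(Y j) (kfdSets ↥(Y j)) α) :
    TwoWins ↥(⋃ j, Y j) (kfdSets ↥(⋃ j, Y j)) α := by
  refine twoWins_of_forall_twoWins (f := fun j => inclusion (subset_iUnion Y j))
    (fun _ y => ⟨{y}, singleton_mem_kfdSets y, rfl⟩)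
    (fun S hS => iUnion_mem_kfdSets fun j => (IsEmbedding.inclusion _).image_mem_kfdSets (hS j))
    (fun j => continuous_inclusion _) (fun z => ?_) h
  obtain ⟨j, hj⟩ := mem_iUnion.mp z.2
  exact ⟨j, ⟨z, hj⟩, rfl⟩

theorem statement_5 {X : Type*} [MetricSpace X] [TopologicalSpace.SeparableSpace X]
    (α : Ordinal.{0}) (n : ℕ) (Y : Fin n → Set X)
    (h : ∀ j, TwoWins ↥(Y j) (kfdSets ↥(Y j)) α) :
    TwoWins ↥(⋃ j, Y j) (kfdSets ↥(⋃ j, Y j)) α :=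
  statement_5_general α n Y h
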